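/- arXiv:2604.11443 — 3 statements merged into one kernel-verified Lean document; each statement's English description precedes it below -/
import Mathlib

section
/- Let (M, μ) be a measure space with 0 < μ(M) < ∞, let ξ : M → ℝ be integrable, and let F : ℝ → ℝ be strictly increasing such that F∘ξ and ξ·(F∘ξ) are integrable. If (∫_M ξ dμ)·(∫_M F(ξ) dμ) = μ(M)·∫_M ξ·F(ξ) dμ, then ξ is constant μ-almost everywhere. -/
/-!
Let `m` be the mean of `ξ`. Expanding, `∫ (ξ - m) (F ξ - F m) = ∫ ξ F(ξ) - m ∫ F(ξ)`, which the
equality hypothesis makes vanish. Since `F` is strictly increasing, the integrand is nonnegative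
and vanishes only where `ξ = m`, so `ξ = m` almost everywhere.
-/

open MeasureTheory

section StrictMono

variable {R : Type*} [Ring R] [LinearOrder R] [IsStrictOrderedRing R] {F : R → R}

theorem StrictMono.sub_mul_sub_pos (hF : StrictMono F) {a b : R} (hab : a ≠ b) :
    0 < (a - b) * (F a - F b) := by
  rcases hab.lt_or_gt with h | h
  · exact mul_pos_of_neg_of_neg (sub_neg.2 h) (sub_neg.2 (hF h))
  · exact mul_pos (sub_pos.2 h) (sub_pos.2 (hF h))

theorem StrictMono.sub_mul_sub_nonneg (hF : StrictMono F) (a b : R) :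
    0 ≤ (a - b) * (F a - F b) := by
  rcases eq_or_ne a b with rfl | hab
  · simp
  · exact (hF.sub_mul_sub_pos hab).le

end StrictMono

namespace MeasureTheory

variable {M : Type*} [MeasurableSpace M] {μ : Measure M}

section FiniteMeasure

variable [IsFiniteMeasure μ] {f g : M → ℝ}

theorem Integrable.sub_const_mul_sub_const (hf : Integrable f μ) (hg : Integrable g μ)
    (hfg : Integrable (fun x => f x * g x) μ) (a b : ℝ) :
    Integrable (fun x => (f x - a) * (g x - b)) μ := by
  have : Integrable (fun x => f x * g x - b * f x - a * g x + a * b) μ :=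
    ((hfg.sub (hf.const_mul b)).sub (hg.const_mul a)).add (integrable_const _)
  exact this.congr (.of_forall fun x => by ring)

theorem integral_sub_const_mul_sub_const (hf : Integrable f μ) (hg : Integrable g μ)
    (hfg : Integrable (fun x => f x * g x) μ) (a b : ℝ) :
    ∫ x, (f x - a) * (g x - b) ∂μ
      = ∫ x, f x * g x ∂μ - b * ∫ x, f x ∂μ - a * ∫ x, g x ∂μ + a * b * μ.real Set.univ := by
  have hexp : (fun x => (f x - a) * (g x - b))
      = fun x => f x * g x - b * f x - a * g x + a * b := by
    funext x; ring
  have hfg_bf := hfg.sub (hf.const_mul b)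
  rw [hexp, integral_add (f := fun x => f x * g x - b * f x - a * g x)
      (hfg_bf.sub (hg.const_mul a)) (integrable_const _),
    integral_sub (f := fun x => f x * g x - b * f x) hfg_bf (hg.const_mul a),
    integral_sub hfg (hf.const_mul b), integral_const_mul, integral_const_mul, integral_const,
    smul_eq_mul, mul_comm (μ.real _)]

end FiniteMeasure

theorem ae_eq_of_integral_sub_mul_sub_eq_zero {F : ℝ → ℝ} (hF : StrictMono F) {ξ : M → ℝ}
    {c : ℝ} (hint : Integrable (fun x => (ξ x - c) * (F (ξ x) - F c)) μ)
    (hzero : ∫ x, (ξ x - c) * (F (ξ x) - F c) ∂μ = 0) :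
    ∀ᵐ x ∂μ, ξ x = c := by
  have hae :=
    (integral_eq_zero_iff_of_nonneg (fun x => hF.sub_mul_sub_nonneg (ξ x) c) hint).1 hzero
  filter_upwards [hae] with x hx
  by_contra hne
  exact (hF.sub_mul_sub_pos hne).ne' hx

end MeasureTheory

/-- Equality case of the generalized Hölder (Chebyshev) integral inequality:
if F is strictly increasing and equality holds, then ξ is a.e. constant. -/
theorem chebyshev_integral_equality_case
    {M : Type*} [MeasurableSpace M] (μ : Measure M) [IsFiniteMeasure μ]
    (hpos : 0 < μ Set.univ)
    (ξ : M → ℝ) (F : ℝ → ℝ) (hF : StrictMono F)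
    (hξ : Integrable ξ μ)
    (hFξ : Integrable (fun x => F (ξ x)) μ)
    (hξFξ : Integrable (fun x => ξ x * F (ξ x)) μ)
    (heq : (∫ x, ξ x ∂μ) * (∫ x, F (ξ x) ∂μ)
      = (μ Set.univ).toReal * ∫ x, ξ x * F (ξ x) ∂μ) :
    ∃ c : ℝ, ∀ᵐ x ∂μ, ξ x = c := by
  change _ = μ.real Set.univ * _ at heq
  have hμ : μ.real Set.univ ≠ 0 := (ENNReal.toReal_pos hpos.ne' (measure_ne_top μ _)).ne'
  set m := (∫ x, ξ x ∂μ) / μ.real Set.univ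
  have hm : m * μ.real Set.univ = ∫ x, ξ x ∂μ := div_mul_cancel₀ _ hμ
  have hmean : ∫ x, ξ x * F (ξ x) ∂μ = m * ∫ x, F (ξ x) ∂μ :=
    mul_left_cancel₀ hμ (by linear_combination -heq - (∫ x, F (ξ x) ∂μ) * hm)
  refine ⟨m, ae_eq_of_integral_sub_mul_sub_eq_zero hF
    (hξ.sub_const_mul_sub_const hFξ hξFξ m (F m)) ?_⟩
  rw [integral_sub_const_mul_sub_const hξ hFξ hξFξ, ← hm, hmean]
  ring
end

section
/- Let c > 0, let η : ℝ → ℝ be twice continuously differentiable, and fix θ ∈ ℝ. For ε ∈ ℝ define ρ(ε) = c(1 + ε·η(θ)), p(ε) = ε·c·η'(θ), q(ε) = ε·c·η''(θ), and K(ε) = (sinh(ρ(ε))²·cosh(ρ(ε)) + 2·p(ε)²·cosh(ρ(ε)) − q(ε)·sinh(ρ(ε))) / (sinh(ρ(ε))² + p(ε)²)^{3/2}. Then K is differentiable at ε = 0 with K'(0) = −(c / sinh(c)²)·(η''(θ) + η(θ)). -/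
/-!
At the geodesic circle `ρ ≡ c` we have `ρ_θ = ρ_θθ = 0`. The slope `ρ_θ` enters the curvature
only through `ρ_θ²`, so it drops out of the linearization, and the first variation is
`∂_ρ κ · δρ + ∂_{ρ_θθ} κ · δρ_θθ` with both partials equal to `-1 / sinh² c`
(differentiate `κ(ρ, 0, 0) = coth ρ`, and note `κ` is affine in `ρ_θθ` with slope `-sinh ρ / sinh³ ρ`).
-/

open Real

/-- The geodesic curvature of a radial graph `ρ` over `S¹` in `H²`, in terms of the values
`r = ρ`, `p = ρ_θ`, `q = ρ_θθ` at a point. -/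
noncomputable def radialGraphCurvature (r p q : ℝ) : ℝ :=
  (sinh r ^ 2 * cosh r + 2 * p ^ 2 * cosh r - q * sinh r) / (sinh r ^ 2 + p ^ 2) ^ ((3 : ℝ) / 2)

lemma sq_rpow_three_halves {x : ℝ} (hx : 0 ≤ x) : (x ^ 2) ^ ((3 : ℝ) / 2) = x ^ 3 := by
  rw [← rpow_natCast x 2, ← rpow_mul hx, ← rpow_natCast x 3]
  norm_num

section

variable {r p q : ℝ → ℝ} {r' p' q' t : ℝ}

lemma hasDerivAt_radialGraphCurvature_numerator (hr : HasDerivAt r r' t) (hp : HasDerivAt p p' t)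
    (hq : HasDerivAt q q' t) (hp₀ : p t = 0) (hq₀ : q t = 0) :
    HasDerivAt
      (fun ε => sinh (r ε) ^ 2 * cosh (r ε) + 2 * p ε ^ 2 * cosh (r ε) - q ε * sinh (r ε))
      (2 * sinh (r t) * cosh (r t) ^ 2 * r' + sinh (r t) ^ 3 * r' - q' * sinh (r t)) t := by
  have h := (((hr.sinh.fun_pow 2).fun_mul hr.cosh).fun_add
    (((hp.fun_pow 2).const_mul 2).fun_mul hr.cosh)).fun_sub (hq.fun_mul hr.sinh)
  refine h.congr_deriv ?_
  rw [hp₀, hq₀]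
  ring

lemma hasDerivAt_radialGraphCurvature_denominator (hr : HasDerivAt r r' t)
    (hp : HasDerivAt p p' t) (hr₀ : 0 < r t) (hp₀ : p t = 0) :
    HasDerivAt (fun ε => (sinh (r ε) ^ 2 + p ε ^ 2) ^ ((3 : ℝ) / 2))
      (3 * sinh (r t) ^ 2 * cosh (r t) * r') t := by
  have hs : 0 < sinh (r t) := sinh_pos_iff.mpr hr₀
  have h := ((hr.sinh.fun_pow 2).fun_add (hp.fun_pow 2)).rpow_const (p := (3 : ℝ) / 2)
    (Or.inr (by norm_num))
  refine h.congr_deriv ?_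
  norm_num [hp₀, ← sqrt_eq_rpow, sqrt_sq hs.le]
  ring

theorem hasDerivAt_radialGraphCurvature (hr : HasDerivAt r r' t) (hp : HasDerivAt p p' t)
    (hq : HasDerivAt q q' t) (hr₀ : 0 < r t) (hp₀ : p t = 0) (hq₀ : q t = 0) :
    HasDerivAt (fun ε => radialGraphCurvature (r ε) (p ε) (q ε))
      (-(r' + q') / sinh (r t) ^ 2) t := by
  have hs : 0 < sinh (r t) := sinh_pos_iff.mpr hr₀
  have hD₀ : (sinh (r t) ^ 2 + p t ^ 2) ^ ((3 : ℝ) / 2) = sinh (r t) ^ 3 := by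
    rw [hp₀, zero_pow two_ne_zero, add_zero, sq_rpow_three_halves hs.le]
  have h := (hasDerivAt_radialGraphCurvature_numerator hr hp hq hp₀ hq₀).fun_div
    (hasDerivAt_radialGraphCurvature_denominator hr hp hr₀ hp₀) (by rw [hD₀]; positivity)
  refine h.congr_deriv ?_
  rw [hD₀, hp₀, hq₀]
  field_simp
  linear_combination (-(sinh (r t) ^ 2 * r')) * cosh_sq (r t)

end

theorem curvature_linearization_general (c : ℝ) (hc : 0 < c) (η : ℝ → ℝ)
    (θ : ℝ) :
    HasDerivAt (fun ε : ℝ =>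
        (Real.sinh (c * (1 + ε * η θ)) ^ 2 * Real.cosh (c * (1 + ε * η θ))
          + 2 * (ε * c * deriv η θ) ^ 2 * Real.cosh (c * (1 + ε * η θ))
          - (ε * c * deriv (deriv η) θ) * Real.sinh (c * (1 + ε * η θ)))
        / (Real.sinh (c * (1 + ε * η θ)) ^ 2 + (ε * c * deriv η θ) ^ 2) ^ ((3 : ℝ) / 2))
      (-(c / Real.sinh c ^ 2) * (deriv (deriv η) θ + η θ)) 0 := by
  have hρ : HasDerivAt (fun ε : ℝ => c * (1 + ε * η θ)) (c * η θ) 0 := by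
    simpa using (((hasDerivAt_id (0 : ℝ)).mul_const (η θ)).const_add 1).const_mul c
  have hscaled (x : ℝ) : HasDerivAt (fun ε : ℝ => ε * c * x) (c * x) 0 := by
    simpa using ((hasDerivAt_id (0 : ℝ)).mul_const c).mul_const x
  have h := hasDerivAt_radialGraphCurvature hρ (hscaled (deriv η θ)) (hscaled (deriv (deriv η) θ))
    (by simpa using hc) (by simp) (by simp)
  refine h.congr_deriv ?_
  simp only [zero_mul, add_zero, mul_one]
  ring

/-- Derivative computation (3.21): linearization of the geodesic curvature of a radial
graph in H² at the geodesic circle ρ ≡ c gives K'(0) = −(c/sinh²c)(η''(θ)+η(θ)). -/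
theorem curvature_linearization (c : ℝ) (hc : 0 < c) (η : ℝ → ℝ)
    (hη : ContDiff ℝ 2 η) (θ : ℝ) :
    HasDerivAt (fun ε : ℝ =>
        (Real.sinh (c * (1 + ε * η θ)) ^ 2 * Real.cosh (c * (1 + ε * η θ))
          + 2 * (ε * c * deriv η θ) ^ 2 * Real.cosh (c * (1 + ε * η θ))
          - (ε * c * deriv (deriv η) θ) * Real.sinh (c * (1 + ε * η θ)))
        / (Real.sinh (c * (1 + ε * η θ)) ^ 2 + (ε * c * deriv η θ) ^ 2) ^ ((3 : ℝ) / 2))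
      (-(c / Real.sinh c ^ 2) * (deriv (deriv η) θ + η θ)) 0 :=
  curvature_linearization_general c hc η θ
end

section
/- Let α < 0 be a real number, let φ : ℝ → ℝ, and let κ : ℝ × ℝ → ℝ be a smooth function with κ(s,t) > 0 for all (s,t), satisfying the evolution equation ∂κ/∂t (s,t) = −∂²/∂s² (κ(s,t)^α) + (κ(s,t)² − 1)·(φ(t) − κ(s,t)^α) for all (s,t). Define W(s,t) = κ(s,t) + 1/κ(s,t). Then for all (s,t): ∂W/∂t = −α·κ^{α−1}·∂²W/∂s² + α(1−α)·κ^{α−2}·(∂κ/∂s)·(∂W/∂s) + 2α·κ^{α−4}·(∂κ/∂s)² + ((κ²−1)²/κ²)·(φ(t) − κ^α). -/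
private lemma derivW (f : ℝ → ℝ) (hf : Differentiable ℝ f) (hpos : ∀ x, 0 < f x) (x : ℝ) :
    deriv (fun y => f y + 1 / f y) x = deriv f x - deriv f x / f x ^ 2 := by
  have h : HasDerivAt (fun y => f y + 1 / f y)
      (deriv f x + (0 * f x - 1 * deriv f x) / f x ^ 2) x :=
    (hf x).hasDerivAt.add (((hasDerivAt_const x (1:ℝ)).div (hf x).hasDerivAt (hpos x).ne'))
  rw [h.deriv]; ring

private lemma derivP (f : ℝ → ℝ) (hf : Differentiable ℝ f) (hpos : ∀ x, 0 < f x) (α : ℝ) (x : ℝ) :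
    deriv (fun y => f y ^ α) x = deriv f x * α * f x ^ (α - 1) :=
  ((hf x).hasDerivAt.rpow_const (Or.inl (hpos x).ne')).deriv

private lemma derivW2 (f : ℝ → ℝ) (hf : Differentiable ℝ f) (hf' : Differentiable ℝ (deriv f))
    (hpos : ∀ x, 0 < f x) (x : ℝ) :
    deriv (deriv (fun y => f y + 1 / f y)) x
      = deriv (deriv f) x * (1 - 1 / f x ^ 2) + 2 * deriv f x ^ 2 / f x ^ 3 := by
  have e : deriv (fun y => f y + 1 / f y) = fun y => deriv f y - deriv f y / f y ^ 2 :=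
    funext (derivW f hf hpos)
  rw [e]
  have h : HasDerivAt (fun y => deriv f y - deriv f y / f y ^ 2)
      (deriv (deriv f) x -
        (deriv (deriv f) x * f x ^ 2 - deriv f x * (2 * f x ^ 1 * deriv f x)) / (f x ^ 2) ^ 2) x :=
    (hf' x).hasDerivAt.sub
      ((hf' x).hasDerivAt.div ((hf x).hasDerivAt.pow 2) (pow_ne_zero 2 (hpos x).ne'))
  rw [h.deriv]
  have : f x ≠ 0 := (hpos x).ne'
  field_simp
  ring

private lemma derivP2 (f : ℝ → ℝ) (hf : Differentiable ℝ f) (hf' : Differentiable ℝ (deriv f))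
    (hpos : ∀ x, 0 < f x) (α : ℝ) (x : ℝ) :
    deriv (deriv (fun y => f y ^ α)) x
      = deriv (deriv f) x * α * f x ^ (α - 1)
        + deriv f x ^ 2 * (α * (α - 1)) * f x ^ (α - 2) := by
  have e : deriv (fun y => f y ^ α) = fun y => deriv f y * α * f y ^ (α - 1) :=
    funext (derivP f hf hpos α)
  rw [e]
  have h : HasDerivAt (fun y => deriv f y * α * f y ^ (α - 1))
      ((deriv (deriv f) x * α) * f x ^ (α - 1)
        + (deriv f x * α) * (deriv f x * (α - 1) * f x ^ (α - 1 - 1))) x :=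
    ((hf' x).hasDerivAt.mul_const α).mul
      ((hf x).hasDerivAt.rpow_const (Or.inl (hpos x).ne'))
  rw [h.deriv, show α - 1 - 1 = α - 2 by ring]
  ring

/-- Evolution identity (4.3): if κ > 0 is smooth and satisfies
κ_t = −(κ^α)_{ss} + (κ²−1)(φ(t) − κ^α), then W = κ + 1/κ satisfies
W_t = −α κ^{α−1} W_{ss} + α(1−α) κ^{α−2} κ_s W_s + 2α κ^{α−4} κ_s² + ((κ²−1)²/κ²)(φ − κ^α). -/
theorem evolution_of_W (α : ℝ) (hα : α < 0) (φ : ℝ → ℝ) (κ : ℝ → ℝ → ℝ)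
    (hsmooth : ContDiff ℝ (⊤ : ℕ∞) (fun p : ℝ × ℝ => κ p.1 p.2))
    (hpos : ∀ s t, 0 < κ s t)
    (hevol : ∀ s t, deriv (fun τ => κ s τ) t
      = -(deriv (deriv (fun σ => κ σ t ^ α)) s)
        + (κ s t ^ 2 - 1) * (φ t - κ s t ^ α)) :
    ∀ s t, deriv (fun τ => κ s τ + 1 / κ s τ) t
      = -α * κ s t ^ (α - 1) * deriv (deriv (fun σ => κ σ t + 1 / κ σ t)) s
        + α * (1 - α) * κ s t ^ (α - 2) * deriv (fun σ => κ σ t) s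
            * deriv (fun σ => κ σ t + 1 / κ σ t) s
        + 2 * α * κ s t ^ (α - 4) * (deriv (fun σ => κ σ t) s) ^ 2
        + ((κ s t ^ 2 - 1) ^ 2 / κ s t ^ 2) * (φ t - κ s t ^ α) := by
  intro s t
  -- smoothness of the two partial functions
  have hfc : ContDiff ℝ (⊤ : ℕ∞) (fun σ => κ σ t) := hsmooth.comp (contDiff_id.prodMk contDiff_const)
  have hgc : ContDiff ℝ (⊤ : ℕ∞) (fun τ => κ s τ) := hsmooth.comp (contDiff_const.prodMk contDiff_id)
  have hfd : Differentiable ℝ (fun σ => κ σ t) := hfc.differentiable (by simp)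
  have hgd : Differentiable ℝ (fun τ => κ s τ) := hgc.differentiable (by simp)
  have hfd' : Differentiable ℝ (deriv (fun σ => κ σ t)) := by
    have h := (contDiff_infty_iff_deriv.mp (hfc.of_le (by simp))).2
    exact h.differentiable (by simp)
  -- derivative identities
  have hL := derivW (fun τ => κ s τ) hgd (hpos s) t
  have hW1 := derivW (fun σ => κ σ t) hfd (fun x => hpos x t) s
  have hW2 := derivW2 (fun σ => κ σ t) hfd hfd' (fun x => hpos x t) s
  have hP2 := derivP2 (fun σ => κ σ t) hfd hfd' (fun x => hpos x t) α s
  rw [hL, hW1, hW2, hevol s t, hP2]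
  -- algebra
  have hK : (0:ℝ) < κ s t := hpos s t
  have e1 : κ s t ^ (α - 1) = κ s t ^ α / κ s t := by
    rw [Real.rpow_sub hK, Real.rpow_one]
  have e2 : κ s t ^ (α - 2) = κ s t ^ α / κ s t ^ 2 := by
    rw [Real.rpow_sub hK, Real.rpow_two]
  have e4 : κ s t ^ (α - 4) = κ s t ^ α / κ s t ^ 4 := by
    rw [Real.rpow_sub hK, show (4:ℝ) = ((4:ℕ):ℝ) by norm_num, Real.rpow_natCast]
  rw [e1, e2, e4]
  have hne : κ s t ≠ 0 := hK.ne'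
  field_simp
  ring
end
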